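/- Let Q be the (n+1)×(n+1) matrix with Q(i,i) = -β_i and Q(i,n) = β_i for i < n (with β_i ≥ 0), Q(n,j) = 0 for all j, and all other entries zero (state n is the absorbing 'mask' state). Then for t ≥ 0, the matrix exponential exp(tQ) satisfies: exp(tQ)(i,i) = exp(-β_i t), exp(tQ)(i,n) = 1 - exp(-β_i t) for i < n, exp(tQ)(n,n) = 1, and all other entries are 0. -/

import Mathlib

open Matrix Finset

/-!
Let `N` be the matrix whose column `a` (the mask state) is the indicator of the non-absorbing
states and which is zero elsewhere. Then `N² = 0`, so `1 + N` is invertible with inverse `1 - N`, and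
`t • Q = (1 + N) * diagonal d * (1 - N)` with `d i = -β i * t` off the mask state and `d a = 0`.
Hence `exp (t • Q) = (1 + N) * diagonal (exp ∘ d) * (1 - N)`, whose entries are read off directly.
-/

namespace Matrix

variable {ι R : Type*} [DecidableEq ι]

def absorbingColumn [Zero R] [One R] (a : ι) : Matrix ι ι R :=
  of fun i j => if j = a ∧ i ≠ a then 1 else 0

@[simp]
theorem absorbingColumn_apply [Zero R] [One R] (a i j : ι) :
    absorbingColumn (R := R) a i j = if j = a ∧ i ≠ a then 1 else 0 :=
  rfl

variable [Fintype ι]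

section Semiring

variable [Semiring R]

theorem absorbingColumn_mul_self (a : ι) :
    absorbingColumn (R := R) a * absorbingColumn a = 0 := by
  ext i j
  refine Finset.sum_eq_zero fun k _ => ?_
  by_cases hk : k = a <;> simp [hk]

theorem absorbingColumn_mul_diagonal (a : ι) (e : ι → R) :
    absorbingColumn a * diagonal e = e a • absorbingColumn a := by
  ext i j
  by_cases hj : j = a <;> simp [hj]

end Semiring

variable [Ring R]

theorem one_add_absorbingColumn_mul_one_sub (a : ι) :
    (1 + absorbingColumn (R := R) a) * (1 - absorbingColumn a) = 1 := by
  rw [add_mul, one_mul, mul_sub, mul_one, absorbingColumn_mul_self]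
  abel

theorem conj_absorbingColumn_diagonal (a : ι) (e : ι → R) :
    (1 + absorbingColumn a) * diagonal e * (1 - absorbingColumn a) =
      diagonal e + e a • absorbingColumn a - diagonal e * absorbingColumn a := by
  simp only [add_mul, one_mul, mul_sub, mul_one, absorbingColumn_mul_diagonal, smul_mul,
    absorbingColumn_mul_self, smul_zero]
  abel

theorem conj_absorbingColumn_diagonal_apply (a : ι) (e : ι → R) (i j : ι) :
    ((1 + absorbingColumn a) * diagonal e * (1 - absorbingColumn a) : Matrix ι ι R) i j =
      if i = a then (if j = a then e a else 0)
      else if j = i then e i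
      else if j = a then e a - e i
      else 0 := by
  rw [conj_absorbingColumn_diagonal]
  by_cases hi : i = a
  · subst hi
    by_cases hj : j = i
    · simp [hj]
    · simp [hj, Ne.symm hj]
  · by_cases hji : j = i
    · subst hji
      simp [hi]
    · by_cases hj : j = a <;> simp [hi, hji, hj, Ne.symm hji, Ne.symm hi]

theorem one_add_absorbingColumn_inv {R : Type*} [CommRing R] (a : ι) :
    (1 + absorbingColumn (R := R) a)⁻¹ = 1 - absorbingColumn a :=
  inv_eq_right_inv (one_add_absorbingColumn_mul_one_sub a)

theorem exp_conj_absorbingColumn_diagonal {𝔸 : Type*} [NormedCommRing 𝔸] [NormedAlgebra ℚ 𝔸]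
    [CompleteSpace 𝔸] (a : ι) (d : ι → 𝔸) :
    NormedSpace.exp ((1 + absorbingColumn a) * diagonal d * (1 - absorbingColumn a)) =
      (1 + absorbingColumn a) * diagonal (NormedSpace.exp d) * (1 - absorbingColumn a) := by
  have hU : IsUnit (1 + absorbingColumn (R := 𝔸) a) :=
    IsUnit.of_mul_eq_one _ (one_add_absorbingColumn_mul_one_sub a)
  rw [← one_add_absorbingColumn_inv, exp_conj _ _ hU, exp_diagonal]

end Matrix

theorem exp_absorbing_rate_matrix_general
    (n : ℕ) (β : Fin (n + 1) → ℝ) (t : ℝ)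
    (Q : Matrix (Fin (n + 1)) (Fin (n + 1)) ℝ)
    (hQ : ∀ i j, Q i j =
      if i = Fin.last n then 0
      else if j = i then -β i
      else if j = Fin.last n then β i
      else 0) :
    ∀ i j, NormedSpace.exp (t • Q) i j =
      if i = Fin.last n then (if j = Fin.last n then 1 else 0)
      else if j = i then Real.exp (-(β i) * t)
      else if j = Fin.last n then 1 - Real.exp (-(β i) * t)
      else 0 := by
  set d : Fin (n + 1) → ℝ := fun i => if i = Fin.last n then 0 else -(β i) * t with hd
  have hfact : t • Q = (1 + absorbingColumn (Fin.last n)) * diagonal d *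
      (1 - absorbingColumn (Fin.last n)) := by
    ext i j
    rw [conj_absorbingColumn_diagonal_apply, Matrix.smul_apply, hQ]
    split_ifs <;> simp_all <;> ring
  intro i j
  rw [hfact, exp_conj_absorbingColumn_diagonal, conj_absorbingColumn_diagonal_apply]
  split_ifs <;> simp_all [Real.exp_eq_exp_ℝ]

/-- Explicit matrix exponential of the absorbing rate matrix with per-state
masking rates `β i` (state `Fin.last n` is the absorbing mask state). -/
theorem exp_absorbing_rate_matrix
    (n : ℕ) (β : Fin (n + 1) → ℝ) (hβ : ∀ i, 0 ≤ β i) (t : ℝ) (ht : 0 ≤ t)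
    (Q : Matrix (Fin (n + 1)) (Fin (n + 1)) ℝ)
    (hQ : ∀ i j, Q i j =
      if i = Fin.last n then 0
      else if j = i then -β i
      else if j = Fin.last n then β i
      else 0) :
    ∀ i j, NormedSpace.exp (t • Q) i j =
      if i = Fin.last n then (if j = Fin.last n then 1 else 0)
      else if j = i then Real.exp (-(β i) * t)
      else if j = Fin.last n then 1 - Real.exp (-(β i) * t)
      else 0 :=
  exp_absorbing_rate_matrix_general n β t Q hQ
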